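/- Let ω be a primitive n-th root of unity in a field F of characteristic 0. For every sequence (aₖ)_{k ≥ 2, k ≢ 1 mod n} of elements of F, there exists a sequence (a_{nj+1})_{j≥1} of elements of F such that the formal power series f(z) = ωz + Σ_{k≥2} aₖzᵏ has compositional order exactly n. -/

import Mathlib

open PowerSeries

/-- Composition (substitution) of formal power series: coefficient formula,
valid for `g` with zero constant term. -/
noncomputable def PS.comp {F : Type*} [CommRing F] (f g : PowerSeries F) : PowerSeries F :=
  PowerSeries.mk fun k =>
    ∑ n ∈ Finset.range (k + 1), (PowerSeries.coeff n f) * (PowerSeries.coeff k (g ^ n))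

/-- The group `G` of series with zero constant term and nonzero linear coefficient. -/
def PS.G (F : Type*) [CommRing F] : Set (PowerSeries F) :=
  {f | PowerSeries.constantCoeff f = 0 ∧ PowerSeries.coeff 1 f ≠ 0}

/-- `n`-fold compositional iterate of `f`. -/
noncomputable def PS.iter {F : Type*} [CommRing F] (f : PowerSeries F) : ℕ → PowerSeries F
  | 0 => PowerSeries.X
  | n + 1 => PS.comp f (PS.iter f n)

/-- `f` has compositional order exactly `n`. -/
def PS.HasOrder {F : Type*} [CommRing F] (f : PowerSeries F) (n : ℕ) : Prop :=
  PS.iter f n = PowerSeries.X ∧ ∀ m, 0 < m → m < n → PS.iter f m ≠ PowerSeries.X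

/-!
Build `f` one coefficient at a time and let `g = f⁽ⁿ⁾`. If `g ≡ z mod z ^ k`, comparing the
`z ^ k` coefficients of `f ∘ g = g ∘ f` gives `ω g_k = ω ^ k g_k`, so `g_k = 0` unless
`k ≡ 1 mod n`. At such a resonant degree the coefficient `a_k` of `f` enters `g_k` linearly with
factor `n ω ^ (n - 1)`, which is nonzero in characteristic `0`, so `a_k` can be chosen to make
`g_k = 0`. Hence `g = z`, and `ω ^ m ≠ 1` for `0 < m < n` rules out a smaller order.
-/

open Finset

theorem IsPrimitiveRoot.pow_eq_self_iff {M : Type*} [CommMonoid M] {ω : M} {n : ℕ}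
    (hω : IsPrimitiveRoot ω n) (hn : 0 < n) (k : ℕ) : ω ^ k = ω ↔ k % n = 1 % n := by
  have h := (hω.isOfFinOrder hn.ne').pow_eq_pow_iff_modEq (n := k) (m := 1)
  rwa [pow_one, ← hω.eq_orderOf] at h

namespace PS

section CommRing

variable {R : Type*} [CommRing R]

theorem coeff_comp (f g : R⟦X⟧) (k : ℕ) :
    coeff k (comp f g) = ∑ j ∈ range (k + 1), coeff j f * coeff k (g ^ j) :=
  coeff_mk _ _

theorem coeff_pow_eq_zero_of_lt {g : R⟦X⟧} (hg : constantCoeff g = 0) {j k : ℕ} (h : k < j) :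
    coeff k (g ^ j) = 0 :=
  X_pow_dvd_iff.1 (pow_dvd_pow_of_dvd (X_dvd_iff.2 hg) j) k h

theorem comp_eq_subst (f : R⟦X⟧) {g : R⟦X⟧} (hg : constantCoeff g = 0) :
    comp f g = f.subst g := by
  ext k
  rw [coeff_comp, coeff_subst' (HasSubst.of_constantCoeff_zero' hg),
    finsum_eq_sum_of_support_subset (s := range (k + 1))]
  · simp only [smul_eq_mul]
  · intro j hj
    by_contra hjk
    rw [coe_range, Set.mem_Iio, not_lt] at hjk
    exact hj (by simp only [coeff_pow_eq_zero_of_lt hg (by omega : k < j), smul_zero])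

theorem comp_X (f : R⟦X⟧) : comp f X = f := by
  rw [comp_eq_subst f constantCoeff_X, X_subst]

theorem X_comp {g : R⟦X⟧} (hg : constantCoeff g = 0) : comp X g = g := by
  rw [comp_eq_subst X hg, subst_X (HasSubst.of_constantCoeff_zero' hg)]

theorem constantCoeff_comp (f g : R⟦X⟧) : constantCoeff (comp f g) = constantCoeff f := by
  rw [← coeff_zero_eq_constantCoeff_apply, coeff_comp]
  simp

theorem coeff_one_comp (f g : R⟦X⟧) : coeff 1 (comp f g) = coeff 1 f * coeff 1 g := by
  simp [coeff_comp, sum_range_succ, coeff_one]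

theorem comp_assoc (f : R⟦X⟧) {g h : R⟦X⟧} (hg : constantCoeff g = 0)
    (hh : constantCoeff h = 0) : comp (comp f g) h = comp f (comp g h) := by
  rw [comp_eq_subst f hg, comp_eq_subst g hh, comp_eq_subst _ hh,
    comp_eq_subst f (by rw [← comp_eq_subst g hh, constantCoeff_comp, hg]),
    subst_comp_subst_apply (HasSubst.of_constantCoeff_zero' hg)
      (HasSubst.of_constantCoeff_zero' hh)]

theorem trunc_comp_congr {f f' g g' : R⟦X⟧} {N : ℕ} (hf : trunc N f = trunc N f')
    (hg : trunc N g = trunc N g') : trunc N (comp f g) = trunc N (comp f' g') := by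
  ext k
  simp only [coeff_trunc]
  split_ifs with hk
  · rw [coeff_comp, coeff_comp]
    refine sum_congr rfl fun j hj => ?_
    have hjN : j < N := by rw [mem_range] at hj; omega
    have hpow : trunc N (g ^ j) = trunc N (g' ^ j) := by
      rw [← trunc_trunc_pow, hg, trunc_trunc_pow]
    rw [← coeff_coe_trunc_of_lt hjN, hf, coeff_coe_trunc_of_lt hjN,
      ← coeff_coe_trunc_of_lt hk, hpow, coeff_coe_trunc_of_lt hk]
  · rfl

theorem constantCoeff_iter {f : R⟦X⟧} (hf : constantCoeff f = 0) :
    ∀ m, constantCoeff (iter f m) = 0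
  | 0 => constantCoeff_X
  | m + 1 => by rw [iter, constantCoeff_comp, hf]

theorem coeff_one_iter (f : R⟦X⟧) : ∀ m, coeff 1 (iter f m) = coeff 1 f ^ m
  | 0 => by simp [iter]
  | m + 1 => by rw [iter, coeff_one_comp, coeff_one_iter f m, pow_succ']

theorem iter_succ' {f : R⟦X⟧} (hf : constantCoeff f = 0) :
    ∀ m, iter f (m + 1) = comp (iter f m) f
  | 0 => (comp_X f).trans (X_comp hf).symm
  | m + 1 => calc
      iter f (m + 2) = comp f (comp (iter f m) f) := congrArg (comp f) (iter_succ' hf m)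
      _ = comp (iter f (m + 1)) f := (comp_assoc f (constantCoeff_iter hf m) hf).symm

theorem trunc_iter_congr {f f' : R⟦X⟧} {N : ℕ} (h : trunc N f = trunc N f') :
    ∀ m, trunc N (iter f m) = trunc N (iter f' m)
  | 0 => rfl
  | m + 1 => trunc_comp_congr h (trunc_iter_congr h m)

theorem eq_of_forall_trunc_eq_imp_coeff_eq {g h : R⟦X⟧}
    (hstep : ∀ k, trunc k g = trunc k h → coeff k g = coeff k h) : g = h := by
  have htrunc : ∀ k, trunc k g = trunc k h := by
    intro k
    induction k with
    | zero => rfl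
    | succ k ih => rw [trunc_succ, trunc_succ, ih, hstep k ih]
  ext k
  exact hstep k (htrunc k)

theorem X_pow_dvd_sub_of_trunc_eq {g g' : R⟦X⟧} {k : ℕ} (h : trunc k g = trunc k g') :
    X ^ k ∣ g - g' := by
  have hsplit := eq_X_pow_mul_shift_add_trunc k (g - g')
  rw [trunc_sub, h, sub_self, Polynomial.coe_zero, add_zero] at hsplit
  exact ⟨_, hsplit⟩

theorem coeff_pow_self {g : R⟦X⟧} (hg : constantCoeff g = 0) (k : ℕ) :
    coeff k (g ^ k) = coeff 1 g ^ k := by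
  obtain ⟨h, rfl⟩ := X_dvd_iff.2 hg
  rw [mul_pow, coeff_X_pow_mul', if_pos le_rfl, Nat.sub_self, coeff_zero_eq_constantCoeff_apply,
    map_pow, ← coeff_zero_eq_constantCoeff_apply, ← coeff_succ_X_mul]

theorem coeff_pow_eq_of_trunc_eq {g g' : R⟦X⟧} (hg : constantCoeff g = 0)
    (hg' : constantCoeff g' = 0) {k j : ℕ} (h : trunc k g = trunc k g') (hj : 2 ≤ j) :
    coeff k (g ^ j) = coeff k (g' ^ j) := by
  obtain ⟨i, rfl⟩ : ∃ i, j = i + 2 := ⟨j - 2, by omega⟩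
  have hgeom : X ∣ ∑ l ∈ range (i + 2), g ^ l * g' ^ (i + 1 - l) := by
    refine dvd_sum fun l hl => ?_
    rcases Nat.eq_zero_or_pos l with rfl | hl0
    · exact dvd_mul_of_dvd_right (dvd_pow (X_dvd_iff.2 hg') (by omega)) _
    · exact dvd_mul_of_dvd_left (dvd_pow (X_dvd_iff.2 hg) hl0.ne') _
  have hdvd : X ^ (k + 1) ∣ g ^ (i + 2) - g' ^ (i + 2) := by
    rw [← (Commute.all g g').geom_sum₂_mul, pow_succ']
    exact mul_dvd_mul hgeom (X_pow_dvd_sub_of_trunc_eq h)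
  rw [← sub_eq_zero, ← map_sub]
  exact X_pow_dvd_iff.1 hdvd k (by omega)

theorem coeff_comp_sub_coeff_comp {f f' g g' : R⟦X⟧} {k : ℕ} (hk : 2 ≤ k)
    (hf : trunc k f = trunc k f') (hg : trunc k g = trunc k g')
    (hg0 : constantCoeff g = 0) (hg'0 : constantCoeff g' = 0) :
    coeff k (comp f g) - coeff k (comp f' g') =
      coeff 1 f * (coeff k g - coeff k g') + (coeff k f - coeff k f') * coeff 1 g ^ k := by
  have hf_lt : ∀ {j}, j < k → coeff j f = coeff j f' := fun hj => by
    rw [← coeff_coe_trunc_of_lt hj, hf, coeff_coe_trunc_of_lt hj]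
  have hg_one : coeff 1 g = coeff 1 g' := by
    rw [← coeff_coe_trunc_of_lt (by omega : 1 < k), hg, coeff_coe_trunc_of_lt (by omega)]
  have hlow : ∑ j ∈ range k, (coeff j f * coeff k (g ^ j) - coeff j f' * coeff k (g' ^ j)) =
      coeff 1 f * (coeff k g - coeff k g') := by
    rw [sum_eq_single 1]
    · rw [hf_lt (by omega), pow_one, pow_one, mul_sub]
    · intro j hj hj1
      rw [mem_range] at hj
      rw [hf_lt hj, ← mul_sub]
      rcases Nat.lt_or_ge j 2 with hj2 | hj2
      · obtain rfl : j = 0 := by omega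
        rw [pow_zero, pow_zero, sub_self, mul_zero]
      · rw [coeff_pow_eq_of_trunc_eq hg0 hg'0 hg hj2, sub_self, mul_zero]
    · exact fun h => absurd (mem_range.2 (by omega)) h
  rw [coeff_comp, coeff_comp, ← sum_sub_distrib, sum_range_succ, hlow, coeff_pow_self hg0,
    coeff_pow_self hg'0, ← hg_one]
  ring

theorem trunc_add_C_mul_X_pow (f : R⟦X⟧) (c : R) (k : ℕ) :
    trunc k (f + C c * X ^ k) = trunc k f := by
  rw [map_add, ← mul_one (X ^ k : R⟦X⟧), mul_left_comm, trunc_X_pow_self_mul, add_zero]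

/-- Changing the `z ^ k` coefficient of `f` by `c` shifts that of its `m`-th iterate by
`c (λ ^ (m - 1) + λ ^ (m - 2) λ ^ k + ⋯ + λ ^ ((m - 1) k))` with `λ = coeff 1 f`; at a resonant
`k`, where `λ ^ k = λ`, all `m` terms equal `λ ^ (m - 1)`. -/
theorem coeff_iter_add_C_mul_X_pow_sub {f : R⟦X⟧} (hf : constantCoeff f = 0) {k : ℕ}
    (hk : 2 ≤ k) (hres : coeff 1 f ^ k = coeff 1 f) (c : R) :
    ∀ m, coeff k (iter (f + C c * X ^ k) m) - coeff k (iter f m) =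
      m * c * coeff 1 f ^ (m - 1)
  | 0 => by simp [iter]
  | m + 1 => by
    set f' := f + C c * X ^ k
    have htrunc : trunc k f' = trunc k f := trunc_add_C_mul_X_pow f c k
    have hf' : constantCoeff f' = 0 := by
      rw [← coeff_zero_eq_constantCoeff_apply, map_add, coeff_C_mul_X_pow,
        if_neg (by omega), add_zero, coeff_zero_eq_constantCoeff_apply, hf]
    have hf'_one : coeff 1 f' = coeff 1 f := by
      rw [map_add, coeff_C_mul_X_pow, if_neg (by omega), add_zero]
    have hf'_k : coeff k f' - coeff k f = c := by
      rw [map_add, coeff_C_mul_X_pow, if_pos rfl, add_sub_cancel_left]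
    have hresonant : coeff 1 (iter f' m) ^ k = coeff 1 f ^ m := by
      rw [coeff_one_iter, hf'_one, ← pow_mul, mul_comm m k, pow_mul, hres]
    rw [iter, iter, coeff_comp_sub_coeff_comp hk htrunc (trunc_iter_congr htrunc m)
      (constantCoeff_iter hf' m) (constantCoeff_iter hf m),
      coeff_iter_add_C_mul_X_pow_sub hf hk hres c m, hf'_one, hf'_k, hresonant]
    rcases m with _ | m
    · simp
    · push_cast
      ring

theorem coeff_eq_zero_of_comp_comm [IsDomain R] {f g : R⟦X⟧} (hf : constantCoeff f = 0)
    (hg : constantCoeff g = 0) (hcomm : comp f g = comp g f) {k : ℕ} (hk : 2 ≤ k)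
    (hgX : trunc k g = trunc k X) (hres : coeff 1 f ^ k ≠ coeff 1 f) : coeff k g = 0 := by
  have hfg := coeff_comp_sub_coeff_comp hk rfl hgX hg constantCoeff_X (f := f)
  have hgf := coeff_comp_sub_coeff_comp hk hgX rfl hf hf (f' := X)
  rw [comp_X, hcomm] at hfg
  rw [X_comp hf] at hgf
  rw [coeff_X, if_neg (by omega), sub_zero] at hfg hgf
  have hkey : coeff k g * (coeff 1 f ^ k - coeff 1 f) = 0 := by
    linear_combination hfg - hgf
  exact (mul_eq_zero.1 hkey).resolve_right (sub_ne_zero.2 hres)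

end CommRing

section Construction

variable {F : Type*} [Field F]

/-- At a resonant degree `k ≡ 1 [MOD n]` the coefficient is the one that kills the `z ^ k`
coefficient of the `n`-th iterate, solved for with `coeff_iter_add_C_mul_X_pow_sub`. -/
noncomputable def finiteOrderCoeff (n : ℕ) (ω : F) (a : ℕ → F) (k : ℕ) : F :=
  if k = 0 then 0
  else if k = 1 then ω
  else if k % n ≠ 1 % n then a k
  else -coeff k (iter (mk fun j => if _ : j < k then finiteOrderCoeff n ω a j else 0) n) /
    (n * ω ^ (n - 1))
termination_by k

noncomputable def finiteOrderSeries (n : ℕ) (ω : F) (a : ℕ → F) : F⟦X⟧ :=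
  mk (finiteOrderCoeff n ω a)

variable (n : ℕ) (ω : F) (a : ℕ → F)

theorem constantCoeff_finiteOrderSeries : constantCoeff (finiteOrderSeries n ω a) = 0 := by
  rw [← coeff_zero_eq_constantCoeff_apply, finiteOrderSeries, coeff_mk, finiteOrderCoeff,
    if_pos rfl]

theorem coeff_one_finiteOrderSeries : coeff 1 (finiteOrderSeries n ω a) = ω := by
  rw [finiteOrderSeries, coeff_mk, finiteOrderCoeff, if_neg one_ne_zero, if_pos rfl]

theorem coeff_finiteOrderSeries_of_mod_ne {k : ℕ} (hk : 2 ≤ k) (hkn : k % n ≠ 1 % n) :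
    coeff k (finiteOrderSeries n ω a) = a k := by
  rw [finiteOrderSeries, coeff_mk, finiteOrderCoeff, if_neg (by omega), if_neg (by omega),
    if_pos hkn]

theorem coeff_finiteOrderSeries_of_mod_eq {k : ℕ} (hk : 2 ≤ k) (hkn : k % n = 1 % n) :
    coeff k (finiteOrderSeries n ω a) =
      -coeff k (iter (trunc k (finiteOrderSeries n ω a)) n) / (n * ω ^ (n - 1)) := by
  have htrunc : (trunc k (finiteOrderSeries n ω a) : F⟦X⟧) =
      mk fun j => if _ : j < k then finiteOrderCoeff n ω a j else 0 := by
    ext j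
    rw [Polynomial.coeff_coe, coeff_trunc, coeff_mk, dite_eq_ite, finiteOrderSeries, coeff_mk]
  rw [htrunc, finiteOrderSeries, coeff_mk, finiteOrderCoeff, if_neg (by omega), if_neg (by omega),
    if_neg (not_not.2 hkn)]

variable [CharZero F] {n ω}

theorem coeff_iter_finiteOrderSeries_of_mod_eq (hn : 0 < n) (hω : IsPrimitiveRoot ω n) {k : ℕ}
    (hk : 2 ≤ k) (hkn : k % n = 1 % n) : coeff k (iter (finiteOrderSeries n ω a) n) = 0 := by
  have hcoeff := coeff_finiteOrderSeries_of_mod_eq n ω a hk hkn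
  set f := finiteOrderSeries n ω a
  set f₀ : F⟦X⟧ := (trunc k f : F⟦X⟧)
  have hf₀ : constantCoeff f₀ = 0 := by
    rw [← coeff_zero_eq_constantCoeff_apply, coeff_coe_trunc_of_lt (by omega),
      coeff_zero_eq_constantCoeff_apply, constantCoeff_finiteOrderSeries]
  have hf₀_one : coeff 1 f₀ = ω := by
    rw [coeff_coe_trunc_of_lt (by omega), coeff_one_finiteOrderSeries]
  have hsplit : trunc (k + 1) f = trunc (k + 1) (f₀ + C (coeff k f) * X ^ k) := by
    ext j
    rw [coeff_trunc, coeff_trunc, map_add, Polynomial.coeff_coe, coeff_trunc, coeff_C_mul_X_pow]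
    rcases lt_trichotomy j k with hjk | rfl | hjk
    · rw [if_pos (by omega), if_pos (by omega), if_pos hjk, if_neg hjk.ne, add_zero]
    · rw [if_pos j.lt_succ_self, if_pos j.lt_succ_self, if_neg (lt_irrefl j), if_pos rfl,
        zero_add]
    · rw [if_neg (by omega), if_neg (by omega)]
  have hperturb := coeff_iter_add_C_mul_X_pow_sub hf₀ hk
    (hf₀_one ▸ (hω.pow_eq_self_iff hn k).2 hkn) (coeff k f) n
  rw [← coeff_coe_trunc_of_lt k.lt_succ_self, trunc_iter_congr hsplit,
    coeff_coe_trunc_of_lt k.lt_succ_self, ← sub_add_cancel (coeff k _) (coeff k (iter f₀ n)),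
    hperturb, hf₀_one, hcoeff]
  have hn₀ : (n : F) ≠ 0 := Nat.cast_ne_zero.2 hn.ne'
  have hω₀ : ω ≠ 0 := hω.ne_zero hn.ne'
  field_simp
  ring

theorem iter_finiteOrderSeries (hn : 0 < n) (hω : IsPrimitiveRoot ω n) :
    iter (finiteOrderSeries n ω a) n = X := by
  have hf := constantCoeff_finiteOrderSeries n ω a
  have hf_one := coeff_one_finiteOrderSeries n ω a
  refine eq_of_forall_trunc_eq_imp_coeff_eq fun k htrunc => ?_
  rcases (show k = 0 ∨ k = 1 ∨ 2 ≤ k by omega) with rfl | rfl | hk2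
  · simp only [coeff_zero_eq_constantCoeff_apply, constantCoeff_iter hf, constantCoeff_X]
  · rw [coeff_one_iter, hf_one, hω.pow_eq_one, coeff_one_X]
  rw [coeff_X, if_neg (by omega)]
  by_cases hkn : k % n = 1 % n
  · exact coeff_iter_finiteOrderSeries_of_mod_eq a hn hω hk2 hkn
  · refine coeff_eq_zero_of_comp_comm hf (constantCoeff_iter hf n) (iter_succ' hf n) hk2
      htrunc ?_
    rwa [hf_one, Ne, hω.pow_eq_self_iff hn]

end Construction

end PS

theorem stmt_11 (F : Type*) [Field F] [CharZero F] (n : ℕ) (hn : 0 < n) (ω : F)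
    (hω : IsPrimitiveRoot ω n) (a : ℕ → F) :
    ∃ f : PowerSeries F,
      PowerSeries.constantCoeff f = 0 ∧
      PowerSeries.coeff 1 f = ω ∧
      (∀ k, 2 ≤ k → k % n ≠ 1 % n → PowerSeries.coeff k f = a k) ∧
      PS.HasOrder f n := by
  refine ⟨PS.finiteOrderSeries n ω a, PS.constantCoeff_finiteOrderSeries n ω a,
    PS.coeff_one_finiteOrderSeries n ω a,
    fun k hk hkn => PS.coeff_finiteOrderSeries_of_mod_ne n ω a hk hkn,
    PS.iter_finiteOrderSeries a hn hω, fun m hm hmn hX => ?_⟩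
  have hcoeff_one := congrArg (coeff 1) hX
  rw [PS.coeff_one_iter, PS.coeff_one_finiteOrderSeries, coeff_one_X] at hcoeff_one
  exact hω.pow_ne_one_of_pos_of_lt hm.ne' hmn hcoeff_one
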